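/- arXiv:2505.13133 — 3 statements merged into one kernel-verified Lean document; each statement's English description precedes it below -/
import Mathlib

section
/- Let n' be an odd squarefree positive integer, let τ be in the upper half-plane, and let s ∈ ℂ with Re(s) > 3/2. Then ∑_{(j,k)∈ℤ², j≡1 (mod 4), k≡0 (mod 2), gcd(j,n')=1} (j + k·n'τ)^{−1}·|j + k·n'τ|^{2−2s} = ∑_{d | n'} μ(d)·(−1)^{(d−1)/2}·d^{1−2s}·∑_{(j,k)∈ℤ², j≡1 (mod 4), k≡0 (mod 2)} (j + k·(n'/d)τ)^{−1}·|j + k·(n'/d)τ|^{2−2s}, where μ is the Möbius function; all the double series converge absolutely for Re(s) > 3/2. -/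
open Complex

/-- The Eisenstein-type summand `(j+kw)⁻¹·|j+kw|^{2−2s}`. -/
noncomputable def eisTerm (w : ℂ) (s : ℂ) (p : ℤ × ℤ) : ℂ :=
  ((p.1 : ℂ) + (p.2 : ℂ) * w)⁻¹ *
    (((‖(p.1 : ℂ) + (p.2 : ℂ) * w‖ : ℝ) : ℂ) ^ ((2 : ℂ) - 2 * s))

lemma summable_norm_eisTerm {w : ℂ} (hw : 0 < w.im) {s : ℂ} (hs : (3 / 2 : ℝ) < s.re) :
    Summable fun p : ℤ × ℤ => ‖eisTerm w s p‖ := by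
  set k : ℝ := 2 * s.re - 1 with hk
  have hk2 : (2 : ℝ) < k := by simp [hk]; linarith
  have hk0 : (0 : ℝ) ≤ k := by linarith
  set z : UpperHalfPlane := ⟨w, hw⟩ with hz
  have key : ∀ p : ℤ × ℤ, ‖eisTerm w s p‖ ≤
      EisensteinSeries.r z ^ (-k) * ‖(![p.2, p.1] : Fin 2 → ℤ)‖ ^ (-k) := by
    intro p
    have hb := EisensteinSeries.summand_bound z hk0 ![p.2, p.1]
    simp only [Matrix.cons_val_zero, Matrix.cons_val_one, Matrix.head_cons] at hb
    have hzw : (z : ℂ) = w := rfl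
    rw [hzw] at hb
    by_cases hA : ((p.1 : ℂ) + (p.2 : ℂ) * w) = 0
    · simp only [eisTerm, hA, inv_zero, zero_mul, norm_zero]
      exact mul_nonneg (Real.rpow_nonneg (EisensteinSeries.r_pos z).le _)
        (Real.rpow_nonneg (norm_nonneg _) _)
    · have hAbs : 0 < ‖(p.1 : ℂ) + (p.2 : ℂ) * w‖ := by
        simpa [norm_pos_iff] using hA
      have : ‖eisTerm w s p‖ = ‖(p.1 : ℂ) + (p.2 : ℂ) * w‖ ^ (-k) := by
        rw [eisTerm, norm_mul, norm_inv,
          Complex.norm_cpow_eq_rpow_re_of_pos hAbs]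
        rw [← Real.rpow_neg_one (‖(p.1 : ℂ) + (p.2 : ℂ) * w‖), ← Real.rpow_add hAbs]
        congr 1
        simp only [Complex.sub_re, Complex.mul_re, Complex.re_ofNat, Complex.im_ofNat]
        ring
      rw [this]
      calc ‖(p.1 : ℂ) + (p.2 : ℂ) * w‖ ^ (-k)
          = ‖(p.2 : ℂ) * w + (p.1 : ℂ)‖ ^ (-k) := by rw [add_comm]
        _ ≤ _ := hb
  refine Summable.of_nonneg_of_le (fun p => norm_nonneg _) key ?_
  have hsum := EisensteinSeries.summable_one_div_norm_rpow hk2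
  have : Summable fun p : ℤ × ℤ => ‖(![p.2, p.1] : Fin 2 → ℤ)‖ ^ (-k) := by
    have h2 := ((Equiv.prodComm ℤ ℤ).trans (finTwoArrowEquiv ℤ).symm).summable_iff.mpr hsum
    refine h2.congr fun p => ?_
    simp [finTwoArrowEquiv]
  exact this.mul_left _

lemma eisTerm_smul (d : ℕ) (hd : 0 < d) (ε : ℤ) (hε : ε = 1 ∨ ε = -1) (w s : ℂ) (p : ℤ × ℤ) :
    eisTerm ((d : ℂ) * w) s (ε * d * p.1, ε * p.2) =
      (ε : ℂ) * (d : ℂ) ^ ((1 : ℂ) - 2 * s) * eisTerm w s p := by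
  have hd0 : (d : ℂ) ≠ 0 := Nat.cast_ne_zero.mpr hd.ne'
  have hε0 : (ε : ℂ) ≠ 0 := by rcases hε with h | h <;> simp [h]
  have hεinv : (ε : ℂ)⁻¹ = (ε : ℂ) := by rcases hε with h | h <;> norm_num [h]
  have h1 : ((ε * d * p.1 : ℤ) : ℂ) + ((ε * p.2 : ℤ) : ℂ) * ((d : ℂ) * w)
      = (ε : ℂ) * (d : ℂ) * ((p.1 : ℂ) + (p.2 : ℂ) * w) := by push_cast; ring
  have habs : ‖(ε : ℂ) * (d : ℂ) * ((p.1 : ℂ) + (p.2 : ℂ) * w)‖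
      = (d : ℝ) * ‖(p.1 : ℂ) + (p.2 : ℂ) * w‖ := by
    rcases hε with h | h <;> simp [h, norm_mul, Complex.norm_natCast]
  have hcpow : ((((d : ℝ) * ‖(p.1 : ℂ) + (p.2 : ℂ) * w‖ : ℝ)) : ℂ) ^ ((2 : ℂ) - 2 * s)
      = (d : ℂ) ^ ((2 : ℂ) - 2 * s)
        * (((‖(p.1 : ℂ) + (p.2 : ℂ) * w‖ : ℝ) : ℂ)) ^ ((2 : ℂ) - 2 * s) := by
    rw [Complex.ofReal_mul,
      mul_cpow_ofReal_nonneg (by positivity) (norm_nonneg _)]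
    norm_num
  have hd2 : (d : ℂ) ^ ((2 : ℂ) - 2 * s) = (d : ℂ) ^ ((1 : ℂ) - 2 * s) * (d : ℂ) := by
    rw [show ((2 : ℂ) - 2 * s) = ((1 : ℂ) - 2 * s) + 1 by ring,
      Complex.cpow_add _ _ hd0, Complex.cpow_one]
  have gen : ∀ x y z c : ℂ, x ≠ 0 → (ε : ℂ) * x⁻¹ * y * (z * x * c) = (ε : ℂ) * z * (y * c) := by
    intro x y z c hx
    field_simp
  simp only [eisTerm]
  rw [h1, habs, hcpow, hd2, mul_inv, mul_inv, hεinv]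
  exact gen _ _ _ _ hd0

lemma neg_one_pow_half (d : ℕ) (hd : d % 2 = 1) :
    ((-1 : ℂ)) ^ ((d - 1) / 2) = if d % 4 = 1 then (1 : ℂ) else -1 := by
  by_cases h4 : d % 4 = 1
  · rw [if_pos h4, Even.neg_one_pow (Nat.even_iff.mpr (by omega))]
  · rw [if_neg h4, Odd.neg_one_pow (Nat.odd_iff.mpr (by omega))]

lemma moebius_sum_coprime (n : ℕ) (hn : 0 < n) (j : ℤ) (hj : j ≠ 0) :
    (n.divisors.sum fun d : ℕ => if (d : ℤ) ∣ j then ((ArithmeticFunction.moebius d : ℤ) : ℂ) else 0)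
      = if Int.gcd j (n : ℤ) = 1 then 1 else 0 := by
  classical
  rw [← Finset.sum_filter]
  have hfil : Finset.filter (fun d : ℕ => (d : ℤ) ∣ j) n.divisors
      = (Int.gcd j (n : ℤ)).divisors := by
    ext d
    rw [Finset.mem_filter, Nat.mem_divisors, Nat.mem_divisors]
    constructor
    · rintro ⟨⟨hdn, -⟩, hdj⟩
      refine ⟨?_, ?_⟩
      · rw [← Int.natCast_dvd_natCast]
        exact Int.dvd_coe_gcd hdj (Int.natCast_dvd_natCast.mpr hdn)
      · intro h0
        rcases Int.gcd_eq_zero_iff.mp h0 with ⟨h1, -⟩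
        exact hj h1
    · rintro ⟨hd, -⟩
      have h1 : (d : ℤ) ∣ Int.gcd j (n : ℤ) := Int.natCast_dvd_natCast.mpr hd
      refine ⟨⟨?_, hn.ne'⟩, h1.trans (Int.gcd_dvd_left _ _)⟩
      rw [← Int.natCast_dvd_natCast]
      exact h1.trans (Int.gcd_dvd_right _ _)
  rw [hfil]
  have key : (∑ d ∈ (Int.gcd j (n : ℤ)).divisors, (ArithmeticFunction.moebius d : ℤ))
      = if Int.gcd j (n : ℤ) = 1 then 1 else 0 := by
    rw [← ArithmeticFunction.coe_mul_zeta_apply, ArithmeticFunction.moebius_mul_coe_zeta,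
      ArithmeticFunction.one_apply]
  have := congrArg (fun z : ℤ => (z : ℂ)) key
  push_cast at this
  rw [this]

/-- **Lemma (inclusion–exclusion for Eisenstein series)**: for `n'` odd squarefree,
`τ` in the upper half-plane and `Re(s) > 3/2`,
`∑_{j≡1(4), k≡0(2), (j,n')=1} (j+kn'τ)⁻¹|j+kn'τ|^{2−2s}
  = ∑_{d∣n'} μ(d)(−1)^{(d−1)/2} d^{1−2s} ∑_{j≡1(4),k≡0(2)} (j+k(n'/d)τ)⁻¹|j+k(n'/d)τ|^{2−2s}`,
and all the double series converge absolutely. -/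
theorem eisenstein_inclusion_exclusion (n' : ℕ) (hn : 0 < n') (hodd : Odd n')
    (hsf : Squarefree n') (τ : ℂ) (hτ : 0 < τ.im) (s : ℂ) (hs : (3 / 2 : ℝ) < s.re) :
    Summable (fun p : {p : ℤ × ℤ // p.1 % 4 = 1 ∧ p.2 % 2 = 0 ∧ IsCoprime p.1 (n' : ℤ)} =>
        eisTerm ((n' : ℂ) * τ) s p.val) ∧
    (∀ d ∈ n'.divisors,
      Summable (fun p : {p : ℤ × ℤ // p.1 % 4 = 1 ∧ p.2 % 2 = 0} =>
        eisTerm (((n' / d : ℕ) : ℂ) * τ) s p.val)) ∧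
    (∑' p : {p : ℤ × ℤ // p.1 % 4 = 1 ∧ p.2 % 2 = 0 ∧ IsCoprime p.1 (n' : ℤ)},
        eisTerm ((n' : ℂ) * τ) s p.val) =
      ∑ d ∈ n'.divisors,
        (ArithmeticFunction.moebius d : ℂ) * (-1 : ℂ) ^ ((d - 1) / 2) *
          ((d : ℂ) ^ ((1 : ℂ) - 2 * s)) *
          ∑' p : {p : ℤ × ℤ // p.1 % 4 = 1 ∧ p.2 % 2 = 0},
            eisTerm (((n' / d : ℕ) : ℂ) * τ) s p.val := by
  classical
  have him : ∀ m : ℕ, 0 < m → (0 : ℝ) < ((m : ℂ) * τ).im := by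
    intro m hm
    have h1 : ((m : ℂ) * τ).im = (m : ℝ) * τ.im := by simp [Complex.mul_im]
    have h2 : (0 : ℝ) < (m : ℝ) := by exact_mod_cast hm
    rw [h1]; positivity
  have hτn := him n' hn
  have hnorm : Summable fun p : ℤ × ℤ => ‖eisTerm ((n' : ℂ) * τ) s p‖ :=
    summable_norm_eisTerm hτn hs
  have hsum0 : Summable (eisTerm ((n' : ℂ) * τ) s) := hnorm.of_norm
  have hdpos : ∀ d ∈ n'.divisors, 0 < d := fun d hd =>
    Nat.pos_of_dvd_of_pos (Nat.mem_divisors.mp hd).1 hn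
  have hmpos : ∀ d ∈ n'.divisors, 0 < n' / d := fun d hd =>
    Nat.div_pos (Nat.le_of_dvd hn (Nat.mem_divisors.mp hd).1) (hdpos d hd)
  refine ⟨hsum0.subtype _,
    fun d hd => ((summable_norm_eisTerm (him _ (hmpos d hd)) hs).of_norm).subtype _, ?_⟩
  set T : Set (ℤ × ℤ) := {p | p.1 % 4 = 1 ∧ p.2 % 2 = 0} with hT
  set S : Set (ℤ × ℤ) := {p | p.1 % 4 = 1 ∧ p.2 % 2 = 0 ∧ IsCoprime p.1 (n' : ℤ)} with hSdef
  set F : ℕ → (ℤ × ℤ) → ℂ := fun d p =>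
    if (d : ℤ) ∣ p.1 then T.indicator (eisTerm ((n' : ℂ) * τ) s) p else 0 with hF
  have hFsumm : ∀ d : ℕ, Summable (F d) := by
    intro d
    apply Summable.of_norm_bounded hnorm
    intro p
    simp only [hF]
    split_ifs with h
    · by_cases hp : p ∈ T
      · rw [Set.indicator_of_mem hp]
      · rw [Set.indicator_of_notMem hp]; simp
    · simp
  have hpt : ∀ p, S.indicator (eisTerm ((n' : ℂ) * τ) s) p
      = ∑ d ∈ n'.divisors, ((ArithmeticFunction.moebius d : ℤ) : ℂ) * F d p := by
    intro p
    by_cases hpT : p ∈ T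
    · have h4 : p.1 % 4 = 1 := hpT.1
      have h2 : p.2 % 2 = 0 := hpT.2
      have hj0 : p.1 ≠ 0 := by intro h; rw [h] at h4; norm_num at h4
      have hS_ind : S.indicator (eisTerm ((n' : ℂ) * τ) s) p
          = (if Int.gcd p.1 (n' : ℤ) = 1 then (1 : ℂ) else 0) * eisTerm ((n' : ℂ) * τ) s p := by
        by_cases hc : IsCoprime p.1 (n' : ℤ)
        · rw [Set.indicator_of_mem (show p ∈ S from ⟨h4, h2, hc⟩),
            if_pos (Int.isCoprime_iff_gcd_eq_one.mp hc), one_mul]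
        · rw [Set.indicator_of_notMem (fun hmem => hc hmem.2.2),
            if_neg (fun hg => hc (Int.isCoprime_iff_gcd_eq_one.mpr hg)), zero_mul]
      rw [hS_ind, ← moebius_sum_coprime n' hn p.1 hj0, Finset.sum_mul]
      refine Finset.sum_congr rfl fun d hd => ?_
      simp only [hF]
      rw [Set.indicator_of_mem hpT]
      split_ifs with h
      · ring
      · ring
    · have hps : p ∉ S := fun hmem => hpT ⟨hmem.1, hmem.2.1⟩
      rw [Set.indicator_of_notMem hps]
      symm
      refine Finset.sum_eq_zero fun d hd => ?_
      simp only [hF]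
      rw [Set.indicator_of_notMem hpT]
      split_ifs <;> simp
  have key : ∀ d ∈ n'.divisors, (∑' p, F d p)
      = (-1 : ℂ) ^ ((d - 1) / 2) * (d : ℂ) ^ ((1 : ℂ) - 2 * s) *
        ∑' p : {p : ℤ × ℤ // p.1 % 4 = 1 ∧ p.2 % 2 = 0},
          eisTerm (((n' / d : ℕ) : ℂ) * τ) s p.val := by
    intro d hd
    obtain ⟨hdvd, -⟩ := Nat.mem_divisors.mp hd
    have hdp : 0 < d := hdpos d hd
    have hdo : d % 2 = 1 := by
      obtain ⟨c, hc⟩ := hdvd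
      have ho2 := hodd
      rw [hc] at ho2
      exact Nat.odd_iff.mp (Nat.odd_mul.mp ho2).1
    obtain ⟨ε, hε1, hεd4, hεpow⟩ : ∃ ε : ℤ, (ε = 1 ∨ ε = -1) ∧ (ε * (d : ℤ)) % 4 = 1 ∧
        ((-1 : ℂ)) ^ ((d - 1) / 2) = (ε : ℂ) := by
      by_cases h4 : d % 4 = 1
      · exact ⟨1, Or.inl rfl, by omega, by rw [neg_one_pow_half d hdo, if_pos h4]; norm_num⟩
      · exact ⟨-1, Or.inr rfl, by omega, by rw [neg_one_pow_half d hdo, if_neg h4]; norm_num⟩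
    have hε2 : ε * ε = 1 := by rcases hε1 with h | h <;> simp [h]
    have hε0' : ε ≠ 0 := by rcases hε1 with h | h <;> simp [h]
    have hεd0 : (ε * (d : ℤ)) ≠ 0 := mul_ne_zero hε0' (by exact_mod_cast hdp.ne')
    have hdm : d * (n' / d) = n' := Nat.mul_div_cancel' hdvd
    have hcast : ((d * (n' / d) : ℕ) : ℂ) = (d : ℂ) * ((n' / d : ℕ) : ℂ) := by push_cast; ring
    have hN : (n' : ℂ) * τ = (d : ℂ) * (((n' / d : ℕ) : ℂ) * τ) := by
      rw [← mul_assoc, ← hcast, hdm]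
    have hinj : Function.Injective (fun q : ℤ × ℤ => ((ε * d * q.1 : ℤ), (ε * q.2 : ℤ))) := by
      intro a b hab
      simp only [Prod.mk.injEq] at hab
      exact Prod.ext (mul_left_cancel₀ hεd0 hab.1) (mul_left_cancel₀ hε0' hab.2)
    have hsupp : Function.support (F d)
        ⊆ Set.range (fun q : ℤ × ℤ => ((ε * d * q.1 : ℤ), (ε * q.2 : ℤ))) := by
      intro p hp
      rw [Function.mem_support] at hp
      simp only [hF] at hp
      by_cases hdj : (d : ℤ) ∣ p.1
      · obtain ⟨c, hc⟩ := hdj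
        refine ⟨(ε * c, ε * p.2), Prod.ext ?_ ?_⟩
        · show ε * (d : ℤ) * (ε * c) = p.1
          calc ε * (d : ℤ) * (ε * c) = (ε * ε) * ((d : ℤ) * c) := by ring
            _ = p.1 := by rw [hε2, one_mul, hc]
        · show ε * (ε * p.2) = p.2
          calc ε * (ε * p.2) = (ε * ε) * p.2 := by ring
            _ = p.2 := by rw [hε2, one_mul]
      · rw [if_neg hdj] at hp; exact absurd rfl hp
    have hmem_iff : ∀ q : ℤ × ℤ, (((ε * d * q.1 : ℤ), (ε * q.2 : ℤ)) ∈ T) ↔ q ∈ T := by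
      intro q
      simp only [hT, Set.mem_setOf_eq]
      have hA : (ε * (d : ℤ) * q.1) % 4 = 1 ↔ q.1 % 4 = 1 := by
        rw [Int.mul_emod (ε * (d : ℤ)) q.1, hεd4]
        omega
      have hB : (ε * q.2) % 2 = 0 ↔ q.2 % 2 = 0 := by
        rcases hε1 with h | h <;> subst h <;> omega
      exact and_congr hA hB
    have hFi : ∀ q : ℤ × ℤ, F d ((ε * d * q.1 : ℤ), (ε * q.2 : ℤ))
        = (ε : ℂ) * ((d : ℂ) ^ ((1 : ℂ) - 2 * s)
            * T.indicator (eisTerm (((n' / d : ℕ) : ℂ) * τ) s) q) := by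
      intro q
      simp only [hF]
      split_ifs with hdj
      · by_cases hq : q ∈ T
        · rw [Set.indicator_of_mem ((hmem_iff q).mpr hq), Set.indicator_of_mem hq, hN]
          exact (eisTerm_smul d hdp ε hε1 (((n' / d : ℕ) : ℂ) * τ) s q).trans (by ring)
        · rw [Set.indicator_of_notMem (fun hmem => hq ((hmem_iff q).mp hmem)),
            Set.indicator_of_notMem hq, mul_zero, mul_zero]
      · exact absurd (⟨ε * q.1, by ring⟩ : (d : ℤ) ∣ ε * (d : ℤ) * q.1) hdj
    calc (∑' p, F d p) = ∑' q : ℤ × ℤ, F d ((ε * d * q.1 : ℤ), (ε * q.2 : ℤ)) :=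
          (hinj.tsum_eq hsupp).symm
      _ = ∑' q : ℤ × ℤ, (ε : ℂ) * ((d : ℂ) ^ ((1 : ℂ) - 2 * s)
            * T.indicator (eisTerm (((n' / d : ℕ) : ℂ) * τ) s) q) := tsum_congr hFi
      _ = (ε : ℂ) * ((d : ℂ) ^ ((1 : ℂ) - 2 * s)
            * ∑' q : ℤ × ℤ, T.indicator (eisTerm (((n' / d : ℕ) : ℂ) * τ) s) q) := by
          rw [tsum_mul_left, tsum_mul_left]
      _ = _ := by
          rw [← tsum_subtype T (eisTerm (((n' / d : ℕ) : ℂ) * τ) s), hεpow, ← mul_assoc]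
          rfl
  calc (∑' p : {p : ℤ × ℤ // p.1 % 4 = 1 ∧ p.2 % 2 = 0 ∧ IsCoprime p.1 (n' : ℤ)},
        eisTerm ((n' : ℂ) * τ) s p.val)
      = ∑' p, S.indicator (eisTerm ((n' : ℂ) * τ) s) p := tsum_subtype S _
    _ = ∑' p, ∑ d ∈ n'.divisors, ((ArithmeticFunction.moebius d : ℤ) : ℂ) * F d p :=
        tsum_congr hpt
    _ = ∑ d ∈ n'.divisors, ∑' p, ((ArithmeticFunction.moebius d : ℤ) : ℂ) * F d p :=
        Summable.tsum_finsetSum (fun d _ => (hFsumm d).mul_left _)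
    _ = ∑ d ∈ n'.divisors, ((ArithmeticFunction.moebius d : ℤ) : ℂ) * ∑' p, F d p :=
        Finset.sum_congr rfl fun d _ => tsum_mul_left
    _ = _ := by
        refine Finset.sum_congr rfl fun d hd => ?_
        rw [key d hd]
        ring
end

section
/- Let a, b, c be integers with a > 0, a ≡ 1 (mod 4), b odd, and b² − ac = −1, and set Q(n,m) = an² − 2bnm + cm² (so that Q(n,m) = |na − m(b+i)|²/a). Then the following equalities of subsets of ℤ hold: {Q(n,m) : n, m both even} = {n² + m² : n, m both even}; {Q(n,m) : n odd, m even} = {n² + m² : n even, m odd}; {Q(n,m) : n even, m odd} = {n² + m² : n, m both odd}; {Q(n,m) : n, m both odd} = {n² + m² : n odd, m even}. -/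
/-!
Since `b² - ac = -1`, the form `Q` has discriminant `-4` and is equivalent to `n² + m²`. In `ℤ[i]`
the gcd `d` of `a` and `b + i` has norm `a`; writing `d = u + vi` and `(b + i) / d = s - ti`
gives `Q(n, m) = (nu - ms)² + (nv - mt)²` with `vs - ut = 1`. As `a` and `b` are odd, after
multiplying `d` by a unit `u` is even and `v, s, t` are odd, so this unimodular substitution acts
on parities as `(n, m) ↦ (m, n + m)`, which matches up the four parity classes.
-/

local notation "ℤ[i]" => GaussianInt

theorem star_dvd_star {R : Type*} [CommSemiring R] [StarRing R] {z w : R} (h : z ∣ w) :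
    star z ∣ star w :=
  map_dvd (starRingEnd R) h

namespace GaussianInt

theorem isCoprime_star_of_dvd {a b : ℤ} (ha : Odd a) {d : ℤ[i]} (hda : d ∣ a)
    (hdb : d ∣ ⟨b, 1⟩) : IsCoprime d (star d) := by
  obtain ⟨k, rfl⟩ := ha
  have h2i : IsCoprime ((2 * k + 1 : ℤ) : ℤ[i]) ⟨0, 2⟩ := ⟨1, ⟨0, k⟩, by ext <;> simp; ring⟩
  have hsub : (⟨0, 2⟩ : ℤ[i]) = ⟨b, 1⟩ - star ⟨b, 1⟩ := by ext <;> simp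
  refine IsRelPrime.isCoprime fun g hgd hgd' => h2i.isUnit_of_dvd' (hgd.trans hda) ?_
  rw [hsub]
  exact dvd_sub (hgd.trans hdb) (hgd'.trans (star_dvd_star hdb))

theorem dvd_norm_intCast_mul_add {a b c : ℤ} (h : b ^ 2 + 1 = a * c) (x y : ℤ[i]) :
    a ∣ ((a : ℤ[i]) * x + ⟨b, 1⟩ * y).norm := by
  have hB : (⟨b, 1⟩ : ℤ[i]) * star ⟨b, 1⟩ = a * c := by ext <;> simp; linear_combination h
  rw [← Zsqrtd.intCast_dvd_intCast, Zsqrtd.norm_eq_mul_conj]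
  refine ⟨x * star ((a : ℤ[i]) * x + ⟨b, 1⟩ * y) + ⟨b, 1⟩ * y * star x + c * y * star y, ?_⟩
  simp only [star_add, star_mul, star_intCast]
  linear_combination (y * star y) * hB

theorem exists_norm_eq_and_dvd {a b c : ℤ} (ha : 0 < a) (hodd : Odd a) (h : b ^ 2 + 1 = a * c) :
    ∃ d : ℤ[i], d.norm = a ∧ d ∣ ⟨b, 1⟩ := by
  set d := EuclideanDomain.gcd (a : ℤ[i]) ⟨b, 1⟩
  have hda : d ∣ a := EuclideanDomain.gcd_dvd_left _ _
  have hdb : d ∣ ⟨b, 1⟩ := EuclideanDomain.gcd_dvd_right _ _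
  refine ⟨d, Int.dvd_antisymm (Zsqrtd.norm_nonneg (by norm_num) d) ha.le ?_ ?_, hdb⟩
  · have hda' : star d ∣ a := by simpa using star_dvd_star hda
    rw [← Zsqrtd.intCast_dvd_intCast, Zsqrtd.norm_eq_mul_conj]
    exact (isCoprime_star_of_dvd hodd hda hdb).mul_dvd hda hda'
  · rw [show d = _ from EuclideanDomain.gcd_eq_gcd_ab _ _]
    exact dvd_norm_intCast_mul_add h _ _

end GaussianInt

theorem exists_sq_add_sq_of_sq_add_one_eq_mul {a b c : ℤ} (ha : 0 < a) (hodd : Odd a)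
    (h : b ^ 2 + 1 = a * c) :
    ∃ u v s t : ℤ, u ^ 2 + v ^ 2 = a ∧ u * s + v * t = b ∧ s ^ 2 + t ^ 2 = c ∧
      v * s - u * t = 1 := by
  obtain ⟨d, hd, f, hf⟩ := GaussianInt.exists_norm_eq_and_dvd ha hodd h
  have hre : b = d.re * f.re - d.im * f.im := by
    simpa [sub_eq_add_neg] using congrArg Zsqrtd.re hf
  have him : 1 = d.re * f.im + d.im * f.re := by simpa using congrArg Zsqrtd.im hf
  have hda : d.re ^ 2 + d.im ^ 2 = a := by rw [← hd, Zsqrtd.norm_def]; ring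
  subst hre
  have hfc : f.re ^ 2 + f.im ^ 2 = c := by
    refine mul_left_cancel₀ ha.ne' ?_
    rw [← h, ← hda]
    linear_combination (-1 - (d.re * f.im + d.im * f.re)) * him
  exact ⟨d.re, d.im, f.re, -f.im, hda, by ring, by rw [← hfc]; ring, by linear_combination -him⟩

theorem exists_sq_add_sq_of_sq_add_one_eq_mul_of_odd {a b c : ℤ} (ha : 0 < a) (hodd : Odd a)
    (hb : Odd b) (h : b ^ 2 + 1 = a * c) :
    ∃ u v s t : ℤ, u ^ 2 + v ^ 2 = a ∧ u * s + v * t = b ∧ s ^ 2 + t ^ 2 = c ∧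
      v * s - u * t = 1 ∧
      (u : ZMod 2) = 0 ∧ (v : ZMod 2) = 1 ∧ (s : ZMod 2) = 1 ∧ (t : ZMod 2) = 1 := by
  obtain ⟨u, v, s, t, hua, hub, huc, hdet⟩ := exists_sq_add_sq_of_sq_add_one_eq_mul ha hodd h
  have hparity : ∀ u v s t : ZMod 2, u ^ 2 + v ^ 2 = 1 → u * s + v * t = 1 → v * s - u * t = 1 →
      (u = 0 ∧ v = 1 ∧ s = 1 ∧ t = 1) ∨ (u = 1 ∧ v = 0 ∧ s = 1 ∧ t = 1) := by
    decide
  rcases hparity u v s t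
      (by rw [← ZMod.intCast_eq_one_iff_odd.mpr hodd, ← hua]; push_cast; ring)
      (by rw [← ZMod.intCast_eq_one_iff_odd.mpr hb, ← hub]; push_cast; ring)
      (by rw [← Int.cast_one, ← hdet]; push_cast; ring) with
    ⟨hu, hv, hs, ht⟩ | ⟨hu, hv, hs, ht⟩
  · exact ⟨u, v, s, t, hua, hub, huc, hdet, hu, hv, hs, ht⟩
  · refine ⟨v, -u, t, -s, by rw [← hua]; ring, by rw [← hub]; ring, by rw [← huc]; ring,
      by rw [← hdet]; ring, hv, ?_, ht, ?_⟩ <;> push_cast <;> grind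

theorem setOf_quadForm_eq_setOf_sq_add_sq {a b c u v s t : ℤ} (hua : u ^ 2 + v ^ 2 = a)
    (hub : u * s + v * t = b) (huc : s ^ 2 + t ^ 2 = c) (hdet : v * s - u * t = 1)
    (hu : (u : ZMod 2) = 0) (hv : (v : ZMod 2) = 1) (hs : (s : ZMod 2) = 1)
    (ht : (t : ZMod 2) = 1) (i j : ZMod 2) :
    {x : ℤ | ∃ n m : ℤ, (n : ZMod 2) = i ∧ (m : ZMod 2) = j ∧
        a * n ^ 2 - 2 * b * n * m + c * m ^ 2 = x} =
      {x : ℤ | ∃ X Y : ℤ, (X : ZMod 2) = j ∧ (Y : ZMod 2) = i + j ∧ X ^ 2 + Y ^ 2 = x} := by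
  have hQ (n m : ℤ) : a * n ^ 2 - 2 * b * n * m + c * m ^ 2 =
      (n * u - m * s) ^ 2 + (n * v - m * t) ^ 2 := by
    rw [← hua, ← hub, ← huc]; ring
  ext x
  constructor
  · rintro ⟨n, m, hn, hm, rfl⟩
    refine ⟨n * u - m * s, n * v - m * t, ?_, ?_, (hQ n m).symm⟩ <;> push_cast <;> grind
  · rintro ⟨X, Y, hX, hY, rfl⟩
    refine ⟨s * Y - t * X, u * Y - v * X, ?_, ?_, ?_⟩
    · push_cast; grind
    · push_cast; grind
    · rw [hQ]
      linear_combination (X ^ 2 + Y ^ 2) * (v * s - u * t + 1) * hdet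

/-- **Parity lemma (b odd)**: for `a > 0`, `a ≡ 1 (mod 4)`, `b` odd and `b² − ac = −1`,
the quadratic form `Q(n,m) = an² − 2bnm + cm²` represents, on each parity class of `(n,m)`,
exactly the values of `n² + m²` on the indicated parity class. -/
theorem parity_lemma_odd (a b c : ℤ) (ha : 0 < a) (ha4 : a % 4 = 1) (hb : Odd b)
    (hdet : b ^ 2 - a * c = -1) :
    ({x : ℤ | ∃ n m : ℤ, Even n ∧ Even m ∧ a * n ^ 2 - 2 * b * n * m + c * m ^ 2 = x} =
        {x : ℤ | ∃ n m : ℤ, Even n ∧ Even m ∧ n ^ 2 + m ^ 2 = x}) ∧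
    ({x : ℤ | ∃ n m : ℤ, Odd n ∧ Even m ∧ a * n ^ 2 - 2 * b * n * m + c * m ^ 2 = x} =
        {x : ℤ | ∃ n m : ℤ, Even n ∧ Odd m ∧ n ^ 2 + m ^ 2 = x}) ∧
    ({x : ℤ | ∃ n m : ℤ, Even n ∧ Odd m ∧ a * n ^ 2 - 2 * b * n * m + c * m ^ 2 = x} =
        {x : ℤ | ∃ n m : ℤ, Odd n ∧ Odd m ∧ n ^ 2 + m ^ 2 = x}) ∧
    ({x : ℤ | ∃ n m : ℤ, Odd n ∧ Odd m ∧ a * n ^ 2 - 2 * b * n * m + c * m ^ 2 = x} =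
        {x : ℤ | ∃ n m : ℤ, Odd n ∧ Even m ∧ n ^ 2 + m ^ 2 = x}) := by
  have hodd : Odd a := Int.odd_iff.mpr (by omega)
  obtain ⟨u, v, s, t, hua, hub, huc, hdet', hu, hv, hs, ht⟩ :=
    exists_sq_add_sq_of_sq_add_one_eq_mul_of_odd ha hodd hb (by linarith)
  have key := setOf_quadForm_eq_setOf_sq_add_sq hua hub huc hdet' hu hv hs ht
  simp only [← ZMod.intCast_eq_zero_iff_even, ← ZMod.intCast_eq_one_iff_odd]
  exact ⟨key 0 0, key 1 0, key 0 1, key 1 1⟩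
end

section
/- Let a, b, c be integers with a > 0, a ≡ 1 (mod 4), b even, and b² − ac = −1, and set Q(n,m) = an² − 2bnm + cm² (so that Q(n,m) = |na − m(b+i)|²/a). Then the following equalities of subsets of ℤ hold: {Q(n,m) : n, m both even} = {n² + m² : n, m both even}; {Q(n,m) : n odd, m even} = {n² + m² : n even, m odd}; {Q(n,m) : n even, m odd} = {n² + m² : n odd, m even}; {Q(n,m) : n, m both odd} = {n² + m² : n, m both odd}. -/
lemma even_iff_zmod (x : ℤ) : Even x ↔ (x : ZMod 2) = 0 := by
  rw [even_iff_two_dvd, show ((2:ℤ)) = ((2:ℕ):ℤ) by norm_num,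
    ← ZMod.intCast_zmod_eq_zero_iff_dvd]

lemma odd_iff_zmod (x : ℤ) : Odd x ↔ (x : ZMod 2) = 1 := by
  rw [← Int.not_even_iff_odd, even_iff_zmod]
  have : ∀ y : ZMod 2, ¬ y = 0 ↔ y = 1 := by decide
  exact this _

lemma parity_dichotomy : ∀ p q r s : ZMod 2,
    p^2 + r^2 = 1 → p*q + r*s = 0 → q^2 + s^2 = 1 →
    (p = 1 ∧ q = 0 ∧ r = 0 ∧ s = 1) ∨ (p = 0 ∧ q = 1 ∧ r = 1 ∧ s = 0) := by decide

/-- Reduction theory: a positive binary quadratic form `a n² − 2b nm + c m²` of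
determinant `1` arises from the identity form by an integral change of variables. -/
lemma rep_aux : ∀ N : ℕ, ∀ a b c : ℤ, a ≤ N → 0 < a → b^2 - a*c = -1 →
    ∃ p q r s : ℤ, p^2 + r^2 = a ∧ p*q + r*s = -b ∧ q^2 + s^2 = c := by
  intro N
  induction N with
  | zero => intro a b c h1 h2 h3; exact absurd h1 (by push_cast; omega)
  | succ n ih =>
    intro a b c hle ha h
    by_cases h1 : a = 1
    · subst h1
      exact ⟨1, -b, 0, 1, by ring, by ring, by linear_combination h⟩
    · have ha2 : 2 ≤ a := by omega
      obtain ⟨b', t, hbt, hb'bound⟩ : ∃ b' t : ℤ, b = b' + a * t ∧ 4 * b'^2 ≤ a^2 := by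
        have h1 := Int.emod_add_mul_ediv b a
        have h2 : 0 ≤ b % a := Int.emod_nonneg b (by omega)
        have h3 : b % a < a := Int.emod_lt_of_pos b ha
        by_cases hc : 2 * (b % a) ≤ a
        · exact ⟨b % a, b / a, by linarith, by nlinarith⟩
        · exact ⟨b % a - a, b / a + 1, by ring_nf; linarith, by nlinarith⟩
      have hdvd : a ∣ b'^2 + 1 := by
        have h1 : a ∣ b^2 + 1 := ⟨c, by linarith⟩
        have h2 : b'^2 + 1 = (b^2 + 1) + (b' - b)*(b' + b) := by ring
        rw [h2]
        exact dvd_add h1 (Dvd.dvd.mul_right ⟨-t, by linarith⟩ _)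
      obtain ⟨c', hc'⟩ := hdvd
      have hc'pos : 0 < c' := by nlinarith
      have hc'lt : c' < a := by nlinarith
      obtain ⟨p, q, r, s, h1', h2', h3'⟩ := ih c' b' a (by omega) hc'pos
        (by linear_combination hc')
      refine ⟨q, p - q*t, s, r - s*t, h3', by linear_combination h2' - t*h3' + hbt, ?_⟩
      have key : a * ((p - q*t)^2 + (r - s*t)^2) = a * c := by
        linear_combination a*h1' - 2*a*t*h2' + a*t^2*h3' - hc' + h - (b + b' + a*t)*hbt
      exact mul_left_cancel₀ (by omega) key

/-- Core lemma: given a change of variables whose matrix is congruent to the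
identity mod 2, the four parity-class set equalities hold. -/
lemma main_core (a b c p q r s : ℤ) (hac : a * c - b^2 = 1)
    (hA : p^2 + r^2 = a) (hB : p*q + r*s = -b) (hC : q^2 + s^2 = c)
    (hp : (p : ZMod 2) = 1) (hq : (q : ZMod 2) = 0)
    (hr : (r : ZMod 2) = 0) (hs : (s : ZMod 2) = 1) :
    ({x : ℤ | ∃ n m : ℤ, Even n ∧ Even m ∧ a * n ^ 2 - 2 * b * n * m + c * m ^ 2 = x} =
        {x : ℤ | ∃ n m : ℤ, Even n ∧ Even m ∧ n ^ 2 + m ^ 2 = x}) ∧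
    ({x : ℤ | ∃ n m : ℤ, Odd n ∧ Even m ∧ a * n ^ 2 - 2 * b * n * m + c * m ^ 2 = x} =
        {x : ℤ | ∃ n m : ℤ, Even n ∧ Odd m ∧ n ^ 2 + m ^ 2 = x}) ∧
    ({x : ℤ | ∃ n m : ℤ, Even n ∧ Odd m ∧ a * n ^ 2 - 2 * b * n * m + c * m ^ 2 = x} =
        {x : ℤ | ∃ n m : ℤ, Odd n ∧ Even m ∧ n ^ 2 + m ^ 2 = x}) ∧
    ({x : ℤ | ∃ n m : ℤ, Odd n ∧ Odd m ∧ a * n ^ 2 - 2 * b * n * m + c * m ^ 2 = x} =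
        {x : ℤ | ∃ n m : ℤ, Odd n ∧ Odd m ∧ n ^ 2 + m ^ 2 = x}) := by
  set d := p*s - q*r with hd
  have hd2 : d * d = 1 := by
    linear_combination (q^2+s^2)*hA + a*hC - (p*q+r*s-b)*hB + hac
  have hd1 : d = 1 ∨ d = -1 := Int.isUnit_iff.mp (IsUnit.of_mul_eq_one (a := d) d hd2)
  have hdc : (d : ZMod 2) = 1 := by rcases hd1 with h | h <;> rw [h] <;> decide
  have key : ∀ n m : ℤ, a * n ^ 2 - 2 * b * n * m + c * m ^ 2
      = (p*n + q*m)^2 + (r*n + s*m)^2 := by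
    intro n m; linear_combination (-n^2)*hA - 2*n*m*hB - m^2*hC
  have hinv1 : ∀ u v : ℤ, p*(d*(s*u - q*v)) + q*(d*(p*v - r*u)) = u := by
    intro u v; linear_combination (-(d*u))*hd + u*hd2
  have hinv2 : ∀ u v : ℤ, r*(d*(s*u - q*v)) + s*(d*(p*v - r*u)) = v := by
    intro u v; linear_combination (-(d*v))*hd + v*hd2
  have hQinv : ∀ u v : ℤ, a * (d*(s*u - q*v)) ^ 2 - 2 * b * (d*(s*u - q*v)) * (d*(p*v - r*u))
      + c * (d*(p*v - r*u)) ^ 2 = u^2 + v^2 := by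
    intro u v; rw [key, hinv1, hinv2]
  refine ⟨?_, ?_, ?_, ?_⟩
  · ext x
    simp only [Set.mem_setOf_eq]
    constructor
    · rintro ⟨n, m, hn, hm, hQ⟩
      have hn' := (even_iff_zmod n).mp hn
      have hm' := (even_iff_zmod m).mp hm
      refine ⟨p*n + q*m, r*n + s*m, ?_, ?_, by linear_combination hQ - key n m⟩
      · rw [even_iff_zmod]; push_cast; rw [hp, hq, hn', hm']; ring
      · rw [even_iff_zmod]; push_cast; rw [hr, hs, hn', hm']; ring
    · rintro ⟨u, v, hu, hv, hx⟩
      have hu' := (even_iff_zmod u).mp hu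
      have hv' := (even_iff_zmod v).mp hv
      refine ⟨d*(s*u - q*v), d*(p*v - r*u), ?_, ?_, by rw [hQinv]; exact hx⟩
      · rw [even_iff_zmod]; push_cast; rw [hdc, hs, hq, hu', hv']; ring
      · rw [even_iff_zmod]; push_cast; rw [hdc, hp, hr, hu', hv']; ring
  · ext x
    simp only [Set.mem_setOf_eq]
    constructor
    · rintro ⟨n, m, hn, hm, hQ⟩
      have hn' := (odd_iff_zmod n).mp hn
      have hm' := (even_iff_zmod m).mp hm
      refine ⟨r*n + s*m, p*n + q*m, ?_, ?_, by linear_combination hQ - key n m⟩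
      · rw [even_iff_zmod]; push_cast; rw [hr, hs, hn', hm']; ring
      · rw [odd_iff_zmod]; push_cast; rw [hp, hq, hn', hm']; ring
    · rintro ⟨u, v, hu, hv, hx⟩
      have hu' := (even_iff_zmod u).mp hu
      have hv' := (odd_iff_zmod v).mp hv
      refine ⟨d*(s*v - q*u), d*(p*u - r*v), ?_, ?_,
        by rw [hQinv]; linear_combination hx⟩
      · rw [odd_iff_zmod]; push_cast; rw [hdc, hs, hq, hu', hv']; ring
      · rw [even_iff_zmod]; push_cast; rw [hdc, hp, hr, hu', hv']; ring
  · ext x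
    simp only [Set.mem_setOf_eq]
    constructor
    · rintro ⟨n, m, hn, hm, hQ⟩
      have hn' := (even_iff_zmod n).mp hn
      have hm' := (odd_iff_zmod m).mp hm
      refine ⟨r*n + s*m, p*n + q*m, ?_, ?_, by linear_combination hQ - key n m⟩
      · rw [odd_iff_zmod]; push_cast; rw [hr, hs, hn', hm']; ring
      · rw [even_iff_zmod]; push_cast; rw [hp, hq, hn', hm']; ring
    · rintro ⟨u, v, hu, hv, hx⟩
      have hu' := (odd_iff_zmod u).mp hu
      have hv' := (even_iff_zmod v).mp hv
      refine ⟨d*(s*v - q*u), d*(p*u - r*v), ?_, ?_,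
        by rw [hQinv]; linear_combination hx⟩
      · rw [even_iff_zmod]; push_cast; rw [hdc, hs, hq, hu', hv']; ring
      · rw [odd_iff_zmod]; push_cast; rw [hdc, hp, hr, hu', hv']; ring
  · ext x
    simp only [Set.mem_setOf_eq]
    constructor
    · rintro ⟨n, m, hn, hm, hQ⟩
      have hn' := (odd_iff_zmod n).mp hn
      have hm' := (odd_iff_zmod m).mp hm
      refine ⟨p*n + q*m, r*n + s*m, ?_, ?_, by linear_combination hQ - key n m⟩
      · rw [odd_iff_zmod]; push_cast; rw [hp, hq, hn', hm']; ring
      · rw [odd_iff_zmod]; push_cast; rw [hr, hs, hn', hm']; ring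
    · rintro ⟨u, v, hu, hv, hx⟩
      have hu' := (odd_iff_zmod u).mp hu
      have hv' := (odd_iff_zmod v).mp hv
      refine ⟨d*(s*u - q*v), d*(p*v - r*u), ?_, ?_, by rw [hQinv]; exact hx⟩
      · rw [odd_iff_zmod]; push_cast; rw [hdc, hs, hq, hu', hv']; ring
      · rw [odd_iff_zmod]; push_cast; rw [hdc, hp, hr, hu', hv']; ring

/-- **Parity lemma (b even)**: for `a > 0`, `a ≡ 1 (mod 4)`, `b` even and `b² − ac = −1`,
the quadratic form `Q(n,m) = an² − 2bnm + cm²` represents, on each parity class of `(n,m)`,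
exactly the values of `n² + m²` on the indicated parity class. -/
theorem parity_lemma_even (a b c : ℤ) (ha : 0 < a) (ha4 : a % 4 = 1) (hb : Even b)
    (hdet : b ^ 2 - a * c = -1) :
    ({x : ℤ | ∃ n m : ℤ, Even n ∧ Even m ∧ a * n ^ 2 - 2 * b * n * m + c * m ^ 2 = x} =
        {x : ℤ | ∃ n m : ℤ, Even n ∧ Even m ∧ n ^ 2 + m ^ 2 = x}) ∧
    ({x : ℤ | ∃ n m : ℤ, Odd n ∧ Even m ∧ a * n ^ 2 - 2 * b * n * m + c * m ^ 2 = x} =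
        {x : ℤ | ∃ n m : ℤ, Even n ∧ Odd m ∧ n ^ 2 + m ^ 2 = x}) ∧
    ({x : ℤ | ∃ n m : ℤ, Even n ∧ Odd m ∧ a * n ^ 2 - 2 * b * n * m + c * m ^ 2 = x} =
        {x : ℤ | ∃ n m : ℤ, Odd n ∧ Even m ∧ n ^ 2 + m ^ 2 = x}) ∧
    ({x : ℤ | ∃ n m : ℤ, Odd n ∧ Odd m ∧ a * n ^ 2 - 2 * b * n * m + c * m ^ 2 = x} =
        {x : ℤ | ∃ n m : ℤ, Odd n ∧ Odd m ∧ n ^ 2 + m ^ 2 = x}) := by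
  obtain ⟨p, q, r, s, hA, hB, hC⟩ :=
    rep_aux a.toNat a b c (by omega) ha (by linear_combination hdet)
  have hac : a * c - b^2 = 1 := by linarith
  have ha2 : (a : ZMod 2) = 1 := (odd_iff_zmod a).mp (Int.odd_iff.mpr (by omega))
  have hb2 : (b : ZMod 2) = 0 := (even_iff_zmod b).mp hb
  have hc2 : (c : ZMod 2) = 1 := by
    have := congrArg (Int.cast : ℤ → ZMod 2) hdet
    push_cast at this
    rw [ha2, hb2] at this
    linear_combination -this
  have hA2 : (p : ZMod 2)^2 + (r : ZMod 2)^2 = 1 := by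
    have := congrArg (Int.cast : ℤ → ZMod 2) hA
    push_cast at this; rw [ha2] at this; exact this
  have hB2 : (p : ZMod 2) * q + (r : ZMod 2) * s = 0 := by
    have := congrArg (Int.cast : ℤ → ZMod 2) hB
    push_cast at this; rw [hb2] at this; simpa using this
  have hC2 : (q : ZMod 2)^2 + (s : ZMod 2)^2 = 1 := by
    have := congrArg (Int.cast : ℤ → ZMod 2) hC
    push_cast at this; rw [hc2] at this; exact this
  rcases parity_dichotomy _ _ _ _ hA2 hB2 hC2 with ⟨hp, hq, hr, hs⟩ | ⟨hp, hq, hr, hs⟩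
  · exact main_core a b c p q r s hac hA hB hC hp hq hr hs
  · exact main_core a b c r s p q hac (by linear_combination hA)
      (by linear_combination hB) (by linear_combination hC) hr hs hp hq
end
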